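/- For all integers n ≥ 1 and 0 ≤ k ≤ n−1, one has n · Σ_{p=0}^{n} N(n,k,p) = 2^{k+1} · (k+1) · binomial(2n−k−2, n−1). -/

import Mathlib

/-- The x-coordinate (number of East steps) of the lattice path `P` after `m` steps. -/
def latticePos {n : ℕ} (P : Fin n → Bool) (m : ℕ) : ℕ :=
  (Finset.univ.filter (fun i : Fin n => (i : ℕ) < m ∧ P i = true)).card

/-- The number of intersections of paths `P` and `Q` (common lattice points with
coordinate sum strictly between `0` and `n`). -/
def latticeInter {n : ℕ} (P Q : Fin n → Bool) : ℕ :=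
  ((Finset.Ioo 0 n).filter (fun m => latticePos P m = latticePos Q m)).card

/-- Number of ordered pairs of lattice paths of length `n`, ending at `(r, n-r)` and
`(s, n-s)` respectively, intersecting exactly `k` times (natural-number version). -/
def Mnat (n k r s : ℕ) : ℕ :=
  (Finset.univ.filter (fun PQ : (Fin n → Bool) × (Fin n → Bool) =>
      latticePos PQ.1 n = r ∧ latticePos PQ.2 n = s ∧ latticeInter PQ.1 PQ.2 = k)).card

/-- `M n k r s`, extended by zero to integer arguments. -/
def M (n k r s : ℤ) : ℤ :=
  if 0 ≤ n ∧ 0 ≤ k ∧ 0 ≤ r ∧ 0 ≤ s then Mnat n.toNat k.toNat r.toNat s.toNat else 0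

/-- `N n k r = M n k r r`. -/
def N (n k r : ℤ) : ℤ := M n k r r

/-- `NE n k p = Σ_{r+s=2p, 0 ≤ r,s ≤ n} M n k r s`. -/
noncomputable def NE (n k p : ℤ) : ℤ := ∑ r ∈ Finset.Icc (0 : ℤ) n, M n k r (2 * p - r)

/-- `NO n k p = Σ_{r+s=2p+1, 0 ≤ r,s ≤ n} M n k r s`. -/
noncomputable def NO (n k p : ℤ) : ℤ := ∑ r ∈ Finset.Icc (0 : ℤ) n, M n k r (2 * p + 1 - r)

/-- Binomial coefficient for integer arguments (zero unless both are nonnegative). -/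
def ichoose (a b : ℤ) : ℤ :=
  if 0 ≤ a ∧ 0 ≤ b then (a.toNat).choose b.toNat else 0

/-!
Follow a pair of paths through the signed distance `d` between them, the difference of their
x-coordinates: each step changes `d` by `-1`, `0` or `+1` in `1`, `2` and `1` ways, and the paths
meet exactly when `d = 0`. Removing the last step gives a recurrence in `n` for the number of pairs
with `k` meetings ending at distance `d`. Writing `C` for the generating function of the Catalan
numbers, the coefficients of `(2 x C) ^ (k + 1)` (for `d = 0`) and of `(2 x C) ^ k (x C ^ 2) ^ d`
(for `d > 0`) satisfy the same recurrence, because `C = 1 + x C ^ 2`. Finally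
`(m + j) [x ^ m] C ^ j = j * binom(2 m + j - 1, m)` turns `n [x ^ n] (2 x C) ^ (k + 1)` into the
stated binomial expression.
-/

open Finset

section LatticePath

variable {n : ℕ}

lemma latticePos_eq_sum (P : Fin n → Bool) (m : ℕ) :
    latticePos P m = ∑ i : Fin n, if (i : ℕ) < m ∧ P i = true then 1 else 0 :=
  card_filter _ _

lemma latticePos_le (P : Fin n → Bool) (m : ℕ) : latticePos P m ≤ n :=
  (card_filter_le _ _).trans_eq (card_fin n)

lemma latticePos_snoc_of_le (P : Fin n → Bool) (a : Bool) {m : ℕ} (hm : m ≤ n) :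
    latticePos (Fin.snoc P a : Fin (n + 1) → Bool) m = latticePos P m := by
  rw [latticePos_eq_sum, latticePos_eq_sum, Fin.sum_univ_castSucc, if_neg (by simp; omega)]
  simp [Fin.snoc_castSucc]

lemma latticePos_snoc_last (P : Fin n → Bool) (a : Bool) :
    latticePos (Fin.snoc P a : Fin (n + 1) → Bool) (n + 1) = latticePos P n + a.toNat := by
  rw [latticePos_eq_sum, latticePos_eq_sum, Fin.sum_univ_castSucc]
  cases a <;> simp [Fin.snoc_castSucc]

lemma latticeInter_snoc (hn : n ≠ 0) (P Q : Fin n → Bool) (a b : Bool) :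
    latticeInter (Fin.snoc P a : Fin (n + 1) → Bool) (Fin.snoc Q b) =
      latticeInter P Q + if latticePos P n = latticePos Q n then 1 else 0 := by
  have hIoo : Ioo 0 (n + 1) = insert n (Ioo 0 n) := by
    ext m; simp only [mem_Ioo, mem_insert]; omega
  have hpos : ∀ m ∈ insert n (Ioo 0 n), latticePos (Fin.snoc P a : Fin (n + 1) → Bool) m =
      latticePos P m ∧ latticePos (Fin.snoc Q b : Fin (n + 1) → Bool) m = latticePos Q m := by
    intro m hm
    have : m ≤ n := by simp only [mem_insert, mem_Ioo] at hm; omega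
    exact ⟨latticePos_snoc_of_le P a this, latticePos_snoc_of_le Q b this⟩
  unfold latticeInter
  rw [hIoo, filter_congr fun m hm => by rw [(hpos m hm).1, (hpos m hm).2], filter_insert]
  split_ifs <;> simp [card_insert_of_notMem, add_comm]

lemma latticeInter_comm (P Q : Fin n → Bool) : latticeInter P Q = latticeInter Q P := by
  simp only [latticeInter, eq_comm]

end LatticePath

def pairCount (n : ℕ) (k d : ℤ) : ℤ :=
  #{PQ : (Fin n → Bool) × (Fin n → Bool) |
    (latticePos PQ.1 n : ℤ) - latticePos PQ.2 n = d ∧ (latticeInter PQ.1 PQ.2 : ℤ) = k}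

lemma pairCount_of_neg {n : ℕ} {k : ℤ} (hk : k < 0) (d : ℤ) : pairCount n k d = 0 := by
  simp only [pairCount, Nat.cast_eq_zero, card_eq_zero, filter_eq_empty_iff]
  omega

lemma pairCount_neg (n : ℕ) (k d : ℤ) : pairCount n k (-d) = pairCount n k d := by
  unfold pairCount
  congr 1
  refine card_equiv (Equiv.prodComm _ _) fun PQ => ?_
  simp only [mem_filter, mem_univ, true_and, Equiv.prodComm_apply, Prod.fst_swap, Prod.snd_swap,
    latticeInter_comm PQ.2]
  omega

lemma pairCount_succ_eq_sum (n : ℕ) (k d : ℤ) :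
    pairCount (n + 1) k d = ∑ a : Bool, ∑ b : Bool,
      (#{PQ : (Fin n → Bool) × (Fin n → Bool) |
        (latticePos PQ.1 n : ℤ) - latticePos PQ.2 n = d - a.toNat + b.toNat ∧
        (latticeInter (Fin.snoc PQ.1 a : Fin (n + 1) → Bool) (Fin.snoc PQ.2 b) : ℤ) = k} : ℤ) := by
  have hsnoc : ∀ g : (Fin (n + 1) → Bool) → ℤ, ∑ f, g f = ∑ a, ∑ P, g (Fin.snoc P a) :=
    fun g => by rw [← (Fin.snocEquiv fun _ => Bool).sum_comp, Fintype.sum_prod_type]; rfl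
  simp only [pairCount, natCast_card_filter, Fintype.sum_prod_type]
  simp_rw [hsnoc, latticePos_snoc_last]
  refine sum_congr rfl fun a _ => ?_
  rw [sum_comm]
  refine sum_congr rfl fun b _ => sum_congr rfl fun P _ => sum_congr rfl fun Q _ => ?_
  split_ifs <;> omega

lemma pairCount_succ {n : ℕ} (hn : n ≠ 0) (k d : ℤ) :
    pairCount (n + 1) k d = pairCount n (k - if d = 1 then 1 else 0) (d - 1) +
      2 * pairCount n (k - if d = 0 then 1 else 0) d +
      pairCount n (k - if d = -1 then 1 else 0) (d + 1) := by
  have hfiber : ∀ e : ℤ, (#{PQ : (Fin n → Bool) × (Fin n → Bool) |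
      (latticePos PQ.1 n : ℤ) - latticePos PQ.2 n = e ∧
      ((latticeInter PQ.1 PQ.2 + if latticePos PQ.1 n = latticePos PQ.2 n then 1 else 0 : ℕ) : ℤ)
        = k} : ℤ) = pairCount n (k - if e = 0 then 1 else 0) e := by
    intro e
    unfold pairCount
    congr 2
    refine filter_congr fun PQ _ => ?_
    split_ifs <;> omega
  simp only [pairCount_succ_eq_sum, latticeInter_snoc hn, Fintype.sum_bool, hfiber]
  simp only [Bool.toNat_true, Bool.toNat_false, Nat.cast_one, Nat.cast_zero, sub_add_cancel,
    add_zero, sub_zero, sub_eq_zero, add_eq_zero_iff_eq_neg]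
  ring

lemma ichoose_natCast (a b : ℕ) : ichoose a b = a.choose b := by
  simp [ichoose]

lemma ichoose_of_neg_right {b : ℤ} (hb : b < 0) (a : ℤ) : ichoose a b = 0 := by
  simp [ichoose, hb.not_ge]

lemma ichoose_zero_right {a : ℤ} (ha : 0 ≤ a) : ichoose a 0 = 1 := by
  simp [ichoose, ha]

lemma ichoose_eq_add {a : ℤ} (ha : 1 ≤ a) (b : ℤ) :
    ichoose a b = ichoose (a - 1) (b - 1) + ichoose (a - 1) b := by
  obtain ⟨a, rfl⟩ : ∃ a' : ℕ, a = a' + 1 := ⟨(a - 1).toNat, by omega⟩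
  rcases lt_trichotomy b 0 with hb | rfl | hb
  · simp [ichoose_of_neg_right, hb, show b - 1 < 0 by omega]
  · simp [ichoose_of_neg_right, ichoose_zero_right (show (0 : ℤ) ≤ a + 1 by omega),
      ichoose_zero_right (show (0 : ℤ) ≤ a by omega)]
  · obtain ⟨b, rfl⟩ : ∃ b' : ℕ, b = b' + 1 := ⟨(b - 1).toNat, by omega⟩
    simp only [add_sub_cancel_right]
    rw [← Nat.cast_succ, ← Nat.cast_succ, ichoose_natCast, ichoose_natCast, ichoose_natCast,
      Nat.choose_succ_succ, Nat.cast_add]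

lemma ichoose_symm {a b c : ℤ} (h : b + c = a) (hb : 0 ≤ b) (hc : 0 ≤ c) :
    ichoose a b = ichoose a c := by
  lift b to ℕ using hb
  lift c to ℕ using hc
  subst h
  rw [← Nat.cast_add, ichoose_natCast, ichoose_natCast, Nat.choose_symm_add]

/-- The coefficient of `x ^ m` in `C(x) ^ j`, where `C` is the generating function of the Catalan
numbers. -/
def ballot (m j : ℤ) : ℤ := ichoose (2 * m + j - 1) m - ichoose (2 * m + j - 1) (m - 1)

lemma ballot_of_neg {m : ℤ} (hm : m < 0) (j : ℤ) : ballot m j = 0 := by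
  simp [ballot, ichoose_of_neg_right, hm, show m - 1 < 0 by omega]

lemma ballot_zero_left {j : ℤ} (hj : 1 ≤ j) : ballot 0 j = 1 := by
  simp [ballot, ichoose_of_neg_right, ichoose_zero_right (show 0 ≤ j - 1 by omega)]

lemma ballot_zero_right {m : ℤ} (hm : 1 ≤ m) : ballot m 0 = 0 := by
  rw [ballot, ichoose_symm (b := m) (c := m - 1) (by ring) (by omega) (by omega), sub_self]

/-- `C ^ j = C ^ (j - 1) + x C ^ (j + 1)`, from `C = 1 + x C ^ 2`. -/
lemma ballot_eq_add {m j : ℤ} (h : m < 0 ∨ 2 ≤ 2 * m + j) :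
    ballot m j = ballot m (j - 1) + ballot (m - 1) (j + 1) := by
  rcases h with hm | h
  · simp [ballot_of_neg, hm, show m - 1 < 0 by omega]
  · unfold ballot
    rw [ichoose_eq_add (a := 2 * m + j - 1) (by omega) m,
      ichoose_eq_add (a := 2 * m + j - 1) (by omega) (m - 1)]
    ring_nf

lemma ballot_eq_add_two_mul_add {m j : ℤ} (h : m < 0 ∨ 3 ≤ 2 * m + j) :
    ballot m j = ballot m (j - 2) + 2 * ballot (m - 1) j + ballot (m - 2) (j + 2) := by
  rw [ballot_eq_add (by omega), ballot_eq_add (m := m) (j := j - 1) (by omega),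
    ballot_eq_add (m := m - 1) (j := j + 1) (by omega)]
  ring_nf

lemma add_mul_ballot {m j : ℤ} (hm : 0 ≤ m) (hj : 1 ≤ j) :
    (m + j) * ballot m j = j * ichoose (2 * m + j - 1) m := by
  rcases hm.eq_or_lt with rfl | hm
  · simp [ballot_zero_left hj, ichoose_zero_right (show 0 ≤ j - 1 by omega)]
  obtain ⟨m, rfl⟩ : ∃ m' : ℕ, m = m' + 1 := ⟨(m - 1).toNat, by omega⟩
  lift j to ℕ using (by omega)
  have key := Nat.choose_succ_right_eq (2 * m + 1 + j) m
  rw [show 2 * m + 1 + j - m = m + 1 + j by omega] at key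
  rw [ballot, show 2 * ((m : ℤ) + 1) + j - 1 = ((2 * m + 1 + j : ℕ) : ℤ) by push_cast; ring,
    add_sub_cancel_right, ← Nat.cast_add_one, ichoose_natCast, ichoose_natCast]
  push_cast
  linear_combination (by exact_mod_cast key : ((2 * m + 1 + j).choose (m + 1) : ℤ) * (m + 1) =
    (2 * m + 1 + j).choose m * (m + 1 + j))

/-- For `d = 0` this is the coefficient of `x ^ n` in `(2 x C) ^ (k + 1)`, and for `d > 0` the one
in `(2 x C) ^ k (x C ^ 2) ^ d`: a pair splits at its meetings into excursions away from each
other, each counted by `2 x C`, followed by a last stretch that drifts `d` apart. -/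
def pairCountFormula (n k d : ℤ) : ℤ :=
  if d = 0 then 2 ^ (k + 1).toNat * ballot (n - k - 1) (k + 1)
  else 2 ^ k.toNat * ballot (n - k - d) (k + 2 * d)

lemma pairCount_one {k d : ℤ} (hk : 0 ≤ k) (hd : 0 ≤ d) :
    pairCount 1 k d = pairCountFormula 1 k d := by
  have hpos : ∀ P : Fin 0 → Bool, latticePos P 0 = 0 := fun P => rfl
  have hinter : ∀ P Q : Fin 1 → Bool, latticeInter P Q = 0 := fun P Q => rfl
  have hcard : Fintype.card ((Fin 0 → Bool) × (Fin 0 → Bool)) = 1 := rfl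
  rw [pairCount_succ_eq_sum]
  simp only [Fintype.sum_bool, hpos, hinter, hcard, filter_const, apply_ite card, card_univ,
    card_empty, Nat.cast_ite, Bool.toNat_true, Bool.toNat_false, Nat.cast_one, CharP.cast_eq_zero,
    pairCountFormula]
  rcases hk.eq_or_lt with rfl | hk
  · obtain rfl | rfl | hd2 := show d = 0 ∨ d = 1 ∨ 2 ≤ d by omega
    · norm_num [ballot_zero_left]
    · norm_num [ballot_zero_left]
    · rw [if_neg (show d ≠ 0 by omega), ballot_of_neg (show 1 - 0 - d < 0 by omega)]
      split_ifs <;> omega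
  · simp only [hk.ne, and_false, if_false, add_zero]
    split_ifs
    · rw [ballot_of_neg (show 1 - k - 1 < 0 by omega), mul_zero]
    · rw [ballot_of_neg (show 1 - k - d < 0 by omega), mul_zero]

theorem pairCount_eq_formula {n : ℕ} (hn : 1 ≤ n) {k d : ℤ} (hk : 0 ≤ k) (hd : 0 ≤ d) :
    pairCount n k d = pairCountFormula n k d := by
  induction n, hn using Nat.le_induction generalizing k d with
  | base => exact pairCount_one hk hd
  | succ n hn ih =>
    have hmeet : pairCount n (k - 1) 0 = 2 ^ k.toNat * ballot (n - k) k := by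
      rcases hk.eq_or_lt with rfl | hk
      · simp [pairCount_of_neg, ballot_zero_right (show 1 ≤ (n : ℤ) by omega)]
      · rw [ih (by omega) le_rfl, pairCountFormula, if_pos rfl, sub_add_cancel]
        ring_nf
    have hpow : (2 : ℤ) ^ (k + 1).toNat = 2 * 2 ^ k.toNat := by
      rw [show (k + 1).toNat = k.toNat + 1 by omega, pow_succ']
    rw [pairCount_succ (by omega), pairCountFormula, Nat.cast_add_one]
    obtain rfl | rfl | hd2 := show d = 0 ∨ d = 1 ∨ 2 ≤ d by omega
    · simp only [zero_ne_one, show (0 : ℤ) ≠ -1 by norm_num, if_false, if_true, sub_zero,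
        zero_sub, zero_add]
      rw [pairCount_neg, hmeet, ih hk zero_le_one, pairCountFormula, if_neg one_ne_zero,
        ballot_eq_add (m := n + 1 - k - 1) (j := k + 1) (by omega), hpow]
      ring_nf
    · simp only [if_true, sub_self, one_ne_zero, show (1 : ℤ) ≠ -1 by norm_num, if_false,
        sub_zero, one_add_one_eq_two]
      rw [hmeet, ih hk zero_le_one, ih hk zero_le_two, pairCountFormula, pairCountFormula,
        if_neg one_ne_zero, if_neg two_ne_zero,
        ballot_eq_add_two_mul_add (m := n + 1 - k - 1) (j := k + 2 * 1) (by omega)]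
      ring_nf
    · simp only [show d ≠ 1 by omega, show d ≠ 0 by omega, show d ≠ -1 by omega, if_false, sub_zero]
      rw [ih hk (by omega), ih hk hd, ih hk (by omega), pairCountFormula, pairCountFormula,
        pairCountFormula, if_neg (by omega), if_neg (by omega), if_neg (by omega),
        ballot_eq_add_two_mul_add (m := n + 1 - k - d) (j := k + 2 * d) (by omega)]
      ring_nf

lemma sum_N_eq_pairCount (n : ℕ) {k : ℤ} (hk : 0 ≤ k) :
    ∑ p ∈ Icc (0 : ℤ) n, N n k p = pairCount n k 0 := by
  rw [pairCount, card_eq_sum_card_fiberwise (f := fun PQ => (latticePos PQ.1 n : ℤ))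
    (t := Icc 0 n) fun PQ _ => by simp [latticePos_le]]
  push_cast
  refine sum_congr rfl fun p hp => ?_
  rw [mem_Icc] at hp
  simp only [N, M, Int.toNat_natCast, Mnat, filter_filter,
    if_pos (show 0 ≤ (n : ℤ) ∧ 0 ≤ k ∧ 0 ≤ p ∧ 0 ≤ p by omega)]
  congr 2
  exact filter_congr fun PQ _ => by omega

/-- `n · Σ_{p=0}^{n} N(n,k,p) = 2^(k+1) · (k+1) · binom(2n−k−2, n−1)`. -/
theorem N_total_sum (n k : ℤ) (hn : 1 ≤ n) (hk : 0 ≤ k) (hkn : k ≤ n - 1) :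
    n * ∑ p ∈ Finset.Icc (0 : ℤ) n, N n k p =
      2 ^ (k + 1).toNat * (k + 1) * ichoose (2 * n - k - 2) (n - 1) := by
  lift n to ℕ using (by omega)
  have hcycle := add_mul_ballot (m := n - k - 1) (j := k + 1) (by omega) (by omega)
  rw [show (n : ℤ) - k - 1 + (k + 1) = n by ring,
    show 2 * ((n : ℤ) - k - 1) + (k + 1) - 1 = 2 * n - k - 2 by ring] at hcycle
  rw [sum_N_eq_pairCount n hk, pairCount_eq_formula (by omega) hk le_rfl, pairCountFormula,
    if_pos rfl, ichoose_symm (b := n - 1) (c := n - k - 1) (by ring) (by omega) (by omega)]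
  linear_combination 2 ^ (k + 1).toNat * hcycle
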